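/- arXiv:math/0507304 — 4 statements merged into one kernel-verified Lean document; each statement's English description precedes it below -/
import Mathlib

section
/- Let (R, m) be a Noetherian local ring and let cl be an extensive, order-preserving closure operation on ideals of R. Let x₁, …, x_d be a sequence in m such that for each i, the element x_i is a nonzerodivisor modulo cl((x₁,…,x_{i-1})R). If the ideal (x₁,…,x_d)R is cl-closed, then each ideal (x₁,…,x_i)R is cl-closed for i = 1, …, d, and consequently x₁, …, x_d is a regular sequence on R. -/
/-- Let `(R, m)` be a Noetherian local ring, `cl` an extensive, order-preserving closure
operation on ideals, and `x₁, …, x_d` a sequence in `m` such that each `x_i` is a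
nonzerodivisor modulo `cl((x₁,…,x_{i-1}))`. If `(x₁,…,x_d)` is `cl`-closed then so is every
`(x₁,…,x_i)`, and consequently `x₁,…,x_d` is a regular sequence on `R`. -/
theorem cl_closed_of_params (R : Type*) [CommRing R] [IsNoetherianRing R] [IsLocalRing R]
    (cl : Ideal R → Ideal R)
    (hext : ∀ I : Ideal R, I ≤ cl I)
    (hmono : ∀ I J : Ideal R, I ≤ J → cl I ≤ cl J)
    (d : ℕ) (x : Fin d → R) (hxm : ∀ i, x i ∈ IsLocalRing.maximalIdeal R)
    (hnzd : ∀ i : Fin d, ∀ z : R,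
      z * x i ∈ cl (Ideal.span (x '' {j | (j : ℕ) < (i : ℕ)})) →
      z ∈ cl (Ideal.span (x '' {j | (j : ℕ) < (i : ℕ)})))
    (hclosed : cl (Ideal.span (Set.range x)) = Ideal.span (Set.range x)) :
    (∀ i : ℕ, i ≤ d →
        cl (Ideal.span (x '' {j | (j : ℕ) < i})) = Ideal.span (x '' {j | (j : ℕ) < i})) ∧
    (∀ i : Fin d, ∀ z : R,
        z * x i ∈ Ideal.span (x '' {j | (j : ℕ) < (i : ℕ)}) →
        z ∈ Ideal.span (x '' {j | (j : ℕ) < (i : ℕ)})) ∧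
    Ideal.span (Set.range x) ≠ ⊤ := by
  set I : ℕ → Ideal R := fun i => Ideal.span (x '' {j | (j : ℕ) < i}) with hI
  have him : x '' {j : Fin d | (j : ℕ) < d} = Set.range x := by
    ext r
    constructor
    · rintro ⟨j, _, rfl⟩; exact ⟨j, rfl⟩
    · rintro ⟨j, rfl⟩; exact ⟨j, j.isLt, rfl⟩
  have hId : I d = Ideal.span (Set.range x) := by
    simp only [hI]
    rw [him]
  -- I (i+1) = I i ⊔ span {x i}
  have hsucc : ∀ i : Fin d, I (i + 1) = I i ⊔ Ideal.span {x i} := by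
    intro i
    have hset : {j : Fin d | (j : ℕ) < (i : ℕ) + 1} = {j : Fin d | (j : ℕ) < (i : ℕ)} ∪ {i} := by
      ext j
      constructor
      · intro h
        have h' : (j : ℕ) < (i : ℕ) + 1 := h
        rcases lt_or_eq_of_le (Nat.lt_succ_iff.mp h') with h'' | h''
        · exact Or.inl h''
        · exact Or.inr (Fin.ext h'')
      · intro h
        rcases h with h | h
        · exact Nat.lt_succ_of_lt h
        · show (j : ℕ) < (i : ℕ) + 1
          have : j = i := h
          rw [this]
          exact Nat.lt_succ_self _
    simp only [hI]
    rw [hset, Set.image_union, Set.image_singleton, Ideal.span_union]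
  -- the induction step
  have step : ∀ i : Fin d, cl (I (i + 1)) = I (i + 1) → cl (I i) = I i := by
    intro i hcl
    refine le_antisymm ?_ (hext _)
    have hm : (IsLocalRing.maximalIdeal R : Ideal R) ≤ Ideal.jacobson ⊥ :=
      (IsLocalRing.jacobson_eq_maximalIdeal ⊥ bot_ne_top).ge
    refine Submodule.le_of_le_smul_of_le_jacobson_bot
      (IsNoetherian.noetherian (cl (I i))) hm ?_
    intro z hz
    have hz1 : z ∈ I i ⊔ Ideal.span {x i} := by
      rw [← hsucc i, ← hcl]
      exact hmono _ _ (by rw [hsucc i]; exact le_sup_left) hz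
    rcases Submodule.mem_sup.mp hz1 with ⟨a, ha, b, hb, hab⟩
    rcases Ideal.mem_span_singleton'.mp hb with ⟨r, hr⟩
    have hrx : r * x i ∈ cl (I i) := by
      have : r * x i = z - a := by rw [hr, ← hab]; ring
      rw [this]
      exact Submodule.sub_mem _ hz (hext _ ha)
    have hrcl : r ∈ cl (I i) := hnzd i r hrx
    have : z = a + x i * r := by rw [mul_comm, hr, hab]
    rw [this]
    exact Submodule.add_mem _ (Submodule.mem_sup_left ha)
      (Submodule.mem_sup_right (Submodule.smul_mem_smul (hxm i) hrcl))
  -- downward induction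
  have main : ∀ k, k ≤ d → cl (I (d - k)) = I (d - k) := by
    intro k
    induction k with
    | zero => intro _; simpa [hId] using hclosed
    | succ k ih =>
      intro hk
      have hk' : k ≤ d := Nat.le_of_succ_le hk
      have hi : d - (k + 1) < d := Nat.sub_lt (Nat.lt_of_lt_of_le (Nat.succ_pos k) hk) (Nat.succ_pos k)
      have :  d - (k+1) + 1 = d - k := by omega
      have := step ⟨d - (k + 1), hi⟩ (by rw [this] at *; exact ih hk')
      exact this
  have part1 : ∀ i : ℕ, i ≤ d → cl (I i) = I i := by
    intro i hi
    have : d - (d - i) = i := by omega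
    rw [← this]
    exact main (d - i) (Nat.sub_le _ _)
  refine ⟨part1, ?_, ?_⟩
  · intro i z hz
    have : z ∈ cl (I i) := hnzd i z (hext _ hz)
    rwa [part1 i (le_of_lt i.isLt)] at this
  · intro h
    have : Ideal.span (Set.range x) ≤ IsLocalRing.maximalIdeal R := by
      rw [Ideal.span_le]
      rintro _ ⟨i, rfl⟩
      exact hxm i
    rw [h] at this
    exact (IsLocalRing.maximalIdeal.isMaximal R).ne_top (top_le_iff.mp this)
end

section
/- Let R be a commutative ring and x₁, …, x_d a regular sequence on R. For every t ≥ 1, the colon ideal ((x₁ᵗ, …, x_dᵗ)R : (x₁, …, x_d)R) equals (x₁ᵗ, …, x_dᵗ, y^{t-1})R, where y = x₁⋯x_d. -/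
/-!
A regular sequence is quasi-regular (Matsumura, Theorem 16.2): if a form `F` of degree `n` over
`R` satisfies `F(x) ∈ I ^ (n + 1)`, where `I = (x₁, …, x_d)`, then every coefficient of `F` lies
in `I`. This is proved by adjoining one element at a time, the new element being a nonzerodivisor
modulo every power of the ideal of the previous ones.

So the monomials in `x` behave as in a polynomial ring. With `t = a + 1`, the ideal
`M = (x₁ᵗ, …, x_dᵗ, yᵃ)` lies in the colon ideal. Conversely, write `w ∈ ((xᵗ) : I) ∩ Iᵏ` as the
value of a form of degree `k`. Monomials with an exponent `> a`, or with all exponents `≥ a`, lie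
in `M`. Any other monomial `μ` has an exponent `< a` at some `i`. Quasi-regularity shows that,
for `n ≥ t`, `(xᵗ) ∩ Iⁿ` is spanned by the degree-`n` monomials divisible by some `xⱼᵗ`, and
`xᵢ μ` is not one of them; comparing coefficients in `w xᵢ ∈ (xᵗ)` puts the coefficient of `μ`
in `I`. Hence `(xᵗ) : I ⊆ M + Iᵏ` for every `k`, and `I ^ (d a + 1) ⊆ (xᵗ)` by pigeonhole.
-/

open MvPolynomial Ideal Set

section QuasiRegular

variable {σ R : Type*} [CommRing R]

namespace MvPolynomial

def exponentsOn (s : Set σ) (n : ℕ) : Set (σ →₀ ℕ) := {m | m.degree = n ∧ ↑m.support ⊆ s}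

noncomputable def monomialSpan (x : σ → R) (S : Set (σ →₀ ℕ)) : Ideal R :=
  span ((fun m => eval x (monomial m 1)) '' S)

variable (x : σ → R)

theorem mem_monomialSpan_iff {S : Set (σ →₀ ℕ)} {z : R} :
    z ∈ monomialSpan x S ↔ ∃ F ∈ restrictSupport R S, eval x F = z := by
  have : monomialSpan x S = (restrictSupport R S).map (aeval x).toLinearMap := by
    rw [restrictSupport_eq_span, Submodule.map_span, image_image]
    simp [monomialSpan]
  rw [this, Submodule.mem_map]
  simp

theorem eval_monomial_mem_monomialSpan {S : Set (σ →₀ ℕ)} {m : σ →₀ ℕ} (hm : m ∈ S) :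
    eval x (monomial m 1) ∈ monomialSpan x S :=
  subset_span (mem_image_of_mem _ hm)

theorem eval_eq_sum_coeff_mul (F : MvPolynomial σ R) :
    eval x F = ∑ m ∈ F.support, coeff m F * eval x (monomial m 1) := by
  conv_lhs => rw [F.as_sum, map_sum]
  simp [eval_monomial]

theorem eval_monomial_single (i : σ) (k : ℕ) :
    eval x (monomial (Finsupp.single i k) (1 : R)) = x i ^ k := by
  simp [eval_monomial]

theorem eval_monomial_add_single (m : σ →₀ ℕ) (j : σ) :
    eval x (monomial (m + Finsupp.single j 1) (1 : R)) = eval x (monomial m 1) * x j := by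
  simp [monomial_add_single]

theorem eval_monomial_const [Fintype σ] (a : ℕ) :
    eval x (monomial (Finsupp.equivFunOnFinite.symm fun _ => a) (1 : R)) = (∏ i, x i) ^ a := by
  rw [eval_monomial, one_mul, Finsupp.prod_fintype _ _ fun _ => pow_zero _, ← Finset.prod_pow]
  rfl

theorem eval_monomial_dvd {m m' : σ →₀ ℕ} (h : m' ≤ m) :
    eval x (monomial m' (1 : R)) ∣ eval x (monomial m 1) :=
  ⟨eval x (monomial (m - m') 1), by
    rw [← map_mul, monomial_mul, one_mul, add_tsub_cancel_of_le h]⟩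

theorem eval_monomial_mem_pow {s : Set σ} {m : σ →₀ ℕ} (hm : ↑m.support ⊆ s) :
    eval x (monomial m (1 : R)) ∈ span (x '' s) ^ m.degree := by
  rw [eval_monomial, one_mul, Finsupp.prod, Finsupp.degree_apply, ← Finset.prod_pow_eq_pow_sum]
  exact prod_mem_prod fun i hi => pow_mem_pow (subset_span (mem_image_of_mem x (hm hi))) _

theorem add_single_mem_exponentsOn {s : Set σ} {n : ℕ} {m : σ →₀ ℕ}
    (hm : m ∈ exponentsOn s n) {j : σ} (hj : j ∈ s) :
    m + Finsupp.single j 1 ∈ exponentsOn s (n + 1) := by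
  classical
  refine ⟨by rw [map_add, hm.1, Finsupp.degree_single], ?_⟩
  refine (Finset.coe_subset.2 Finsupp.support_add).trans ?_
  rw [Finset.coe_union]
  exact union_subset hm.2
    ((Finset.coe_subset.2 Finsupp.support_single_subset).trans (by simpa using hj))

theorem monomialSpan_mul_span_le {S S' : Set (σ →₀ ℕ)} {s : Set σ}
    (h : ∀ m ∈ S, ∀ j ∈ s, m + Finsupp.single j 1 ∈ S') :
    monomialSpan x S * span (x '' s) ≤ monomialSpan x S' := by
  rw [monomialSpan, span_mul_span', span_le, mul_subset_iff]
  rintro _ ⟨m, hm, rfl⟩ _ ⟨j, hj, rfl⟩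
  rw [← eval_monomial_add_single]
  exact eval_monomial_mem_monomialSpan x (h m hm j hj)

theorem pow_span_image_eq_monomialSpan (s : Set σ) (n : ℕ) :
    span (x '' s) ^ n = monomialSpan x (exponentsOn s n) := by
  refine le_antisymm ?_ ?_
  · induction n with
    | zero =>
      rw [pow_zero, one_eq_top, top_le_iff, eq_top_iff_one, ← map_one (eval x), one_def]
      exact eval_monomial_mem_monomialSpan x ⟨map_zero _, by simp⟩
    | succ n ih =>
      rw [pow_succ]
      exact (mul_mono_left ih).trans
        (monomialSpan_mul_span_le x fun m hm j hj => add_single_mem_exponentsOn hm hj)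
  · rw [monomialSpan, span_le]
    rintro _ ⟨m, hm, rfl⟩
    exact hm.1 ▸ eval_monomial_mem_pow x hm.2

theorem mem_pow_span_image_iff {s : Set σ} {n : ℕ} {z : R} :
    z ∈ span (x '' s) ^ n ↔ ∃ F ∈ restrictSupport R (exponentsOn s n), eval x F = z := by
  rw [pow_span_image_eq_monomialSpan, mem_monomialSpan_iff]

theorem eval_mem_pow {s : Set σ} {n : ℕ} {F : MvPolynomial σ R}
    (hF : F ∈ restrictSupport R (exponentsOn s n)) : eval x F ∈ span (x '' s) ^ n :=
  (mem_pow_span_image_iff x).2 ⟨F, hF, rfl⟩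

theorem eval_mem_pow_succ {s : Set σ} {n : ℕ} {F : MvPolynomial σ R}
    (hF : F ∈ restrictSupport R (exponentsOn s n)) (hc : ∀ m, coeff m F ∈ span (x '' s)) :
    eval x F ∈ span (x '' s) ^ (n + 1) := by
  rw [eval_eq_sum_coeff_mul, pow_succ']
  refine sum_mem fun m hm => mul_mem_mul (hc m) ?_
  rw [pow_span_image_eq_monomialSpan]
  exact eval_monomial_mem_monomialSpan x (hF hm)

open scoped Pointwise in
theorem coeff_mem_of_eval_mem_of_degree_zero {s : Set σ} {F : MvPolynomial σ R}
    (hF : F ∈ restrictSupport R (exponentsOn s 0)) {J : Ideal R} (h : eval x F ∈ J)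
    (m : σ →₀ ℕ) : coeff m F ∈ J := by
  classical
  obtain ⟨r, rfl⟩ : ∃ r, C r = F := by
    have : exponentsOn s 0 ⊆ (0 : Set (σ →₀ ℕ)) := fun m hm =>
      (Finsupp.degree_eq_zero_iff m).1 hm.1
    exact Submodule.mem_one.1 (restrictSupport_zero (R := R) ▸ restrictSupport_mono R this hF)
  rw [eval_C] at h
  rw [coeff_C]
  split_ifs
  exacts [h, zero_mem J]

theorem mul_X_mem_restrictSupport {s : Set σ} {n : ℕ} {F : MvPolynomial σ R}
    (hF : F ∈ restrictSupport R (exponentsOn s n)) {j : σ} (hj : j ∈ s) :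
    F * X j ∈ restrictSupport R (exponentsOn s (n + 1)) := by
  rw [mem_restrictSupport_iff, support_mul_X, Finset.coe_map]
  rintro _ ⟨m, hm, rfl⟩
  exact add_single_mem_exponentsOn (hF hm) hj

theorem divMonomial_single_mem {s : Set σ} {n : ℕ} {F : MvPolynomial σ R} (i : σ)
    (hF : F ∈ restrictSupport R (exponentsOn s (n + 1))) :
    F.divMonomial (Finsupp.single i 1) ∈ restrictSupport R (exponentsOn s n) := by
  rw [mem_restrictSupport_iff]
  intro m hm
  rw [Finset.mem_coe, mem_support_iff, coeff_divMonomial] at hm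
  obtain ⟨hdeg, hsupp⟩ := hF (mem_support_iff.2 hm)
  rw [map_add, Finsupp.degree_single] at hdeg
  exact ⟨by omega, (Finset.coe_subset.2 (Finsupp.support_mono le_add_self)).trans hsupp⟩

theorem modMonomial_single_mem {s : Set σ} {n : ℕ} {F : MvPolynomial σ R} {i : σ}
    (hF : F ∈ restrictSupport R (exponentsOn (insert i s) n)) :
    F.modMonomial (Finsupp.single i 1) ∈ restrictSupport R (exponentsOn s n) := by
  rw [mem_restrictSupport_iff]
  intro m hm
  rw [Finset.mem_coe, mem_support_iff] at hm
  have hle : ¬ Finsupp.single i 1 ≤ m := fun h => hm (coeff_modMonomial_of_le _ h)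
  rw [coeff_modMonomial_of_not_le _ hle] at hm
  obtain ⟨hdeg, hsupp⟩ := hF (mem_support_iff.2 hm)
  refine ⟨hdeg, fun j hj => (hsupp hj).resolve_left ?_⟩
  rintro rfl
  exact hle (Finsupp.single_le_iff.2 (Nat.one_le_iff_ne_zero.2 (Finsupp.mem_support_iff.1 hj)))

theorem eval_eq_mul_eval_divMonomial_add (F : MvPolynomial σ R) (i : σ) :
    eval x F = x i * eval x (F.divMonomial (Finsupp.single i 1))
      + eval x (F.modMonomial (Finsupp.single i 1)) := by
  conv_lhs => rw [← divMonomial_add_modMonomial_single F i]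
  simp

theorem coeff_mem_of_divMonomial_modMonomial {F : MvPolynomial σ R} {i : σ} {J : Ideal R}
    (hdiv : ∀ m, coeff m (F.divMonomial (Finsupp.single i 1)) ∈ J)
    (hmod : ∀ m, coeff m (F.modMonomial (Finsupp.single i 1)) ∈ J) (m : σ →₀ ℕ) :
    coeff m F ∈ J := by
  classical
  rw [← divMonomial_add_modMonomial_single F i, coeff_add, coeff_X_mul']
  split_ifs
  · exact add_mem (hdiv _) (hmod m)
  · simpa using hmod m

end MvPolynomial

/-- Quasi-regularity (Matsumura, §16) of the subfamily of `x` indexed by `s`: the associated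
graded ring of `span (x '' s)` is a polynomial ring over the quotient by it. -/
def IsQuasiRegularOn (x : σ → R) (s : Set σ) : Prop :=
  ∀ n, ∀ F ∈ restrictSupport R (exponentsOn s n),
    eval x F ∈ span (x '' s) ^ (n + 1) → ∀ m, coeff m F ∈ span (x '' s)

namespace IsQuasiRegularOn

variable {x : σ → R} {s : Set σ}

theorem empty (x : σ → R) : IsQuasiRegularOn x ∅ := by
  intro n F hF hval m
  by_cases hc : coeff m F = 0
  · rw [hc]
    exact zero_mem _
  obtain ⟨hdeg, hsupp⟩ := hF (mem_support_iff.2 hc)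
  obtain rfl : m = 0 :=
    Finsupp.support_eq_empty.1 (Finset.coe_eq_empty.1 (subset_empty_iff.1 hsupp))
  subst hdeg
  exact coeff_mem_of_eval_mem_of_degree_zero x hF (by simpa using hval) 0

theorem mem_pow_of_mul_mem_pow (hx : IsQuasiRegularOn x s) {a : R}
    (ha : ∀ z, z * a ∈ span (x '' s) → z ∈ span (x '' s)) {n : ℕ} {z : R}
    (hz : z * a ∈ span (x '' s) ^ n) : z ∈ span (x '' s) ^ n := by
  induction n with
  | zero => simp
  | succ n ih =>
    obtain ⟨F, hF, rfl⟩ := (mem_pow_span_image_iff x).1 (ih (pow_le_pow_right n.le_succ hz))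
    refine eval_mem_pow_succ x hF fun m => ha _ ?_
    have := hx n (a • F) (Submodule.smul_mem _ a hF) (by rwa [smul_eval, mul_comm])
    simpa only [coeff_smul, smul_eq_mul, mul_comm] using this m

theorem insert (hx : IsQuasiRegularOn x s) {i : σ}
    (hi : ∀ z, z * x i ∈ span (x '' s) → z ∈ span (x '' s)) :
    IsQuasiRegularOn x (insert i s) := by
  have hle : span (x '' s) ≤ span (x '' Insert.insert i s) :=
    span_mono (image_mono (subset_insert i s))
  have hxi : x i ∈ span (x '' Insert.insert i s) :=
    subset_span (mem_image_of_mem x (mem_insert i s))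
  intro n
  induction n with
  | zero =>
    exact fun F hF hval => coeff_mem_of_eval_mem_of_degree_zero x hF (by simpa using hval)
  | succ n ih =>
    intro F hF hval
    -- `F(x)` is also the value of a form `H` of degree `n + 2`; split off `xᵢ` from both.
    obtain ⟨H, hH, hHF⟩ := (mem_pow_span_image_iff x).1 hval
    set G := F.divMonomial (Finsupp.single i 1)
    set F₀ := F.modMonomial (Finsupp.single i 1)
    set K := H.divMonomial (Finsupp.single i 1)
    set H₀ := H.modMonomial (Finsupp.single i 1)
    have hsplit : x i * eval x G + eval x F₀ = x i * eval x K + eval x H₀ := by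
      rw [← eval_eq_mul_eval_divMonomial_add, ← eval_eq_mul_eval_divMonomial_add, hHF]
    obtain ⟨W, hW, hWeq⟩ :
        ∃ W ∈ restrictSupport R (exponentsOn s (n + 1)), eval x W = eval x K - eval x G := by
      rw [← mem_pow_span_image_iff]
      refine hx.mem_pow_of_mul_mem_pow hi ?_
      rw [show (eval x K - eval x G) * x i = eval x F₀ - eval x H₀ by linear_combination -hsplit]
      exact sub_mem (eval_mem_pow x (modMonomial_single_mem hF))
        (pow_le_pow_right n.succ.le_succ (eval_mem_pow x (modMonomial_single_mem hH)))
    refine coeff_mem_of_divMonomial_modMonomial (ih G (divMonomial_single_mem i hF) ?_) ?_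
    · rw [show eval x G = eval x K - eval x W by rw [hWeq]; ring]
      exact sub_mem (eval_mem_pow x (divMonomial_single_mem i hH))
        (pow_right_mono hle _ (eval_mem_pow x hW))
    · intro m
      have h := hx (n + 1) (F₀ - x i • W)
        (sub_mem (modMonomial_single_mem hF) (Submodule.smul_mem _ _ hW)) (by
          rw [show eval x (F₀ - x i • W) = eval x H₀ by
            rw [map_sub, smul_eval, hWeq]; linear_combination hsplit]
          exact eval_mem_pow x (modMonomial_single_mem hH)) m
      rw [coeff_sub, coeff_smul, smul_eq_mul] at h
      rw [← sub_add_cancel (coeff m F₀) (x i * coeff m W)]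
      exact add_mem (hle h) (mul_mem_right _ _ hxi)

end IsQuasiRegularOn

theorem isQuasiRegularOn_univ_of_regular {d : ℕ} (x : Fin d → R)
    (hreg : ∀ i : Fin d, ∀ z : R,
      z * x i ∈ span (x '' {j | (j : ℕ) < (i : ℕ)}) →
      z ∈ span (x '' {j | (j : ℕ) < (i : ℕ)})) :
    IsQuasiRegularOn x univ := by
  suffices h : ∀ k, IsQuasiRegularOn x {j : Fin d | (j : ℕ) < k} by simpa using h d
  intro k
  induction k with
  | zero => simpa using IsQuasiRegularOn.empty x
  | succ k ih =>
    by_cases hk : k < d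
    · have : {j : Fin d | (j : ℕ) < k + 1} =
          insert ⟨k, hk⟩ {j : Fin d | (j : ℕ) < k} := by
        ext j
        simp [Fin.ext_iff]
        omega
      rw [this]
      exact ih.insert (hreg ⟨k, hk⟩)
    · have : {j : Fin d | (j : ℕ) < k + 1} = {j : Fin d | (j : ℕ) < k} := by
        ext j
        simp
        omega
      rwa [this]

section Colon

variable (x : σ → R)

theorem span_pow_sup_span_prod_pow_le_colon [Fintype σ] (a : ℕ) :
    span (range fun i => x i ^ (a + 1)) ⊔ span {(∏ i, x i) ^ a} ≤
      (span (range fun i => x i ^ (a + 1))).colon (span (range x)) := by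
  classical
  refine sup_le le_colon (span_le.2 ?_)
  rintro _ rfl
  rw [SetLike.mem_coe, colon_span, Submodule.mem_colon]
  rintro _ ⟨j, rfl⟩
  rw [smul_eq_mul, ← Finset.prod_pow,
    ← Finset.mul_prod_erase Finset.univ (x · ^ a) (Finset.mem_univ j), mul_right_comm, ← pow_succ]
  exact mul_mem_right _ _ (subset_span (mem_range_self j))

theorem exists_lt_of_card_mul_lt_degree [Fintype σ] {m : σ →₀ ℕ} {a : ℕ}
    (h : Fintype.card σ * a < m.degree) : ∃ i, a < m i := by
  by_contra! hle
  rw [Finsupp.degree_eq_sum] at h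
  have := Finset.sum_le_sum fun i (_ : i ∈ Finset.univ) => hle i
  simp only [Finset.sum_const, Finset.card_univ, smul_eq_mul] at this
  omega

theorem span_range_pow_le_span_range_pow [Fintype σ] (a : ℕ) :
    span (range x) ^ (Fintype.card σ * a + 1) ≤ span (range fun i => x i ^ (a + 1)) := by
  rw [← image_univ, pow_span_image_eq_monomialSpan, monomialSpan, span_le]
  rintro _ ⟨m, hm, rfl⟩
  obtain ⟨i, hi⟩ := exists_lt_of_card_mul_lt_degree (a := a) (by rw [hm.1]; omega)
  refine mem_of_dvd _ ?_ (subset_span (mem_range_self i))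
  rw [← eval_monomial_single]
  exact eval_monomial_dvd x (Finsupp.single_le_iff.2 hi)

namespace IsQuasiRegularOn

variable {x}

theorem coeff_mem (hx : IsQuasiRegularOn x univ) {n : ℕ} {F : MvPolynomial σ R}
    (hF : F ∈ restrictSupport R (exponentsOn univ n)) (h : eval x F ∈ span (range x) ^ (n + 1))
    (m : σ →₀ ℕ) : coeff m F ∈ span (range x) := by
  rw [← image_univ] at h ⊢
  exact hx n F hF h m

theorem monomialSpan_inf_pow_le (hx : IsQuasiRegularOn x univ) {U : Set (σ →₀ ℕ)}
    (hU : ∀ m ∈ U, ∀ j, m + Finsupp.single j 1 ∈ U) (n : ℕ) :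
    monomialSpan x (U ∩ exponentsOn univ n) ⊓ span (range x) ^ (n + 1) ≤
      monomialSpan x (U ∩ exponentsOn univ (n + 1)) := by
  rintro z ⟨hz, hzpow⟩
  obtain ⟨F, hF, rfl⟩ := (mem_monomialSpan_iff x).1 hz
  have hc := hx.coeff_mem (restrictSupport_mono R inter_subset_right hF) hzpow
  rw [eval_eq_sum_coeff_mul]
  refine sum_mem fun m hm => ?_
  obtain ⟨hmU, hmE⟩ := hF hm
  rw [mul_comm]
  refine monomialSpan_mul_span_le x (S := {m}) ?_
    (mul_mem_mul (eval_monomial_mem_monomialSpan x rfl) (image_univ ▸ hc m))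
  intro m' hm' j _
  rw [mem_singleton_iff.1 hm']
  exact ⟨hU m hmU j, add_single_mem_exponentsOn hmE (mem_univ j)⟩

theorem span_pow_inf_pow_le (hx : IsQuasiRegularOn x univ) {t n : ℕ} (htn : t ≤ n) :
    span (range fun i => x i ^ t) ⊓ span (range x) ^ n ≤
      monomialSpan x ({m | ∃ i, t ≤ m i} ∩ exponentsOn univ n) := by
  induction n, htn using Nat.le_induction with
  | base =>
    refine inf_le_left.trans (span_le.2 ?_)
    rintro _ ⟨i, rfl⟩
    show x i ^ t ∈ _
    rw [← eval_monomial_single]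
    exact eval_monomial_mem_monomialSpan x (m := Finsupp.single i t)
      ⟨⟨i, by simp⟩, by simp, subset_univ _⟩
  | succ n _ ih =>
    have hle : span (range fun i => x i ^ t) ⊓ span (range x) ^ (n + 1) ≤
        span (range fun i => x i ^ t) ⊓ span (range x) ^ n :=
      inf_le_inf_left _ (pow_le_pow_right n.le_succ)
    refine (le_inf (hle.trans ih) inf_le_right).trans (hx.monomialSpan_inf_pow_le ?_ n)
    rintro m ⟨i, hi⟩ j
    exact ⟨i, hi.trans (by simp)⟩

theorem coeff_mem_of_eval_mem_sup (hx : IsQuasiRegularOn x univ) {t n : ℕ}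
    {F : MvPolynomial σ R} (hF : F ∈ restrictSupport R (exponentsOn univ n))
    (hval : eval x F ∈ span (range fun i => x i ^ t) ⊔ span (range x) ^ (n + 1))
    {m : σ →₀ ℕ} (hm : ∀ i, m i < t) : coeff m F ∈ span (range x) := by
  obtain ⟨a, ha, b, hb, hab⟩ := Submodule.mem_sup.1 hval
  rcases lt_or_ge n t with hnt | htn
  · refine hx.coeff_mem hF (hab ▸ add_mem ?_ hb) m
    refine span_le.2 ?_ ha
    rintro _ ⟨i, rfl⟩
    exact pow_le_pow_right hnt (pow_mem_pow (subset_span (mem_range_self i)) t)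
  · have haI : a ∈ span (range x) ^ n := by
      rw [← add_sub_cancel_right a b, hab, ← image_univ]
      exact sub_mem (eval_mem_pow x hF) (image_univ ▸ pow_le_pow_right n.le_succ hb)
    obtain ⟨B, hB, rfl⟩ := (mem_monomialSpan_iff x).1 (hx.span_pow_inf_pow_le htn ⟨ha, haI⟩)
    have h := hx.coeff_mem (sub_mem hF (restrictSupport_mono R inter_subset_right hB))
      (by rwa [map_sub, ← hab, add_sub_cancel_left]) m
    have hBm : coeff m B = 0 := by
      by_contra hne
      obtain ⟨i, hi⟩ := (hB (mem_support_iff.2 hne)).1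
      exact (hm i).not_ge hi
    rwa [coeff_sub, hBm, sub_zero] at h

theorem colon_inf_pow_le [Fintype σ] (hx : IsQuasiRegularOn x univ) (a k : ℕ) :
    (span (range fun i => x i ^ (a + 1))).colon (span (range x)) ⊓ span (range x) ^ k ≤
      span (range fun i => x i ^ (a + 1)) ⊔ span {(∏ i, x i) ^ a} ⊔
        span (range x) ^ (k + 1) := by
  intro w hw
  obtain ⟨hw, hwk⟩ := Submodule.mem_inf.1 hw
  obtain ⟨F, hF, rfl⟩ := (mem_pow_span_image_iff x).1 (image_univ ▸ hwk)
  rw [eval_eq_sum_coeff_mul]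
  refine sum_mem fun m hm => ?_
  by_cases hbig : ∃ j, a + 1 ≤ m j
  · obtain ⟨j, hj⟩ := hbig
    refine mem_sup_left (mem_sup_left (mul_mem_left _ _
      (mem_of_dvd _ (?_ : x j ^ (a + 1) ∣ _) (subset_span ⟨j, rfl⟩))))
    rw [← eval_monomial_single]
    exact eval_monomial_dvd x (Finsupp.single_le_iff.2 hj)
  by_cases hall : ∀ j, a ≤ m j
  · refine mem_sup_left (mem_sup_right (mul_mem_left _ _
      (mem_of_dvd _ ?_ (mem_span_singleton_self _))))
    rw [← eval_monomial_const]
    exact eval_monomial_dvd x (Finsupp.le_def.2 hall)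
  push Not at hbig hall
  obtain ⟨i, hi⟩ := hall
  have hwi : eval x (F * X i) ∈ span (range fun i => x i ^ (a + 1)) := by
    rw [colon_span, Submodule.mem_colon] at hw
    simpa [mul_comm] using hw (x i) (mem_range_self i)
  have hc := hx.coeff_mem_of_eval_mem_sup (mul_X_mem_restrictSupport hF (mem_univ i))
    (mem_sup_left hwi) (m := m + Finsupp.single i 1) fun j => by
      rcases eq_or_ne j i with rfl | hji
      · simp
        omega
      · simpa [hji] using hbig j
  rw [coeff_mul_X] at hc
  have hmon : eval x (monomial m 1) ∈ span (range x) ^ k :=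
    (hF hm).1 ▸ image_univ ▸ eval_monomial_mem_pow x (subset_univ _)
  exact mem_sup_right (pow_succ' (span (range x)) k ▸ mul_mem_mul hc hmon)

theorem colon_eq [Fintype σ] (hx : IsQuasiRegularOn x univ) (a : ℕ) :
    (span (range fun i => x i ^ (a + 1))).colon (span (range x)) =
      span (range fun i => x i ^ (a + 1)) ⊔ span {(∏ i, x i) ^ a} := by
  refine le_antisymm ?_ (span_pow_sup_span_prod_pow_le_colon x a)
  have h : ∀ k, (span (range fun i => x i ^ (a + 1))).colon (span (range x)) ≤
      span (range fun i => x i ^ (a + 1)) ⊔ span {(∏ i, x i) ^ a} ⊔ span (range x) ^ k := by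
    intro k
    induction k with
    | zero => simp
    | succ k ih =>
      intro z hz
      obtain ⟨s, hs, w, hw, rfl⟩ := Submodule.mem_sup.1 (ih hz)
      have hwc := sub_mem hz (span_pow_sup_span_prod_pow_le_colon x a hs)
      rw [add_sub_cancel_left] at hwc
      exact add_mem (mem_sup_left hs) (hx.colon_inf_pow_le a k ⟨hwc, hw⟩)
  exact (h _).trans (sup_le le_rfl ((span_range_pow_le_span_range_pow x a).trans le_sup_left))

end IsQuasiRegularOn

end Colon

end QuasiRegular

/-- For a regular sequence `x₁,…,x_d` in a commutative ring `R` and `t ≥ 1`, the colon ideal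
`((x₁ᵗ,…,x_dᵗ) : (x₁,…,x_d))` equals `(x₁ᵗ,…,x_dᵗ, y^{t-1})` where `y = x₁⋯x_d`. -/
theorem colon_of_power_parameter_ideal (R : Type*) [CommRing R] (d : ℕ) (x : Fin d → R)
    (hreg : ∀ i : Fin d, ∀ z : R,
      z * x i ∈ Ideal.span (x '' {j | (j : ℕ) < (i : ℕ)}) →
      z ∈ Ideal.span (x '' {j | (j : ℕ) < (i : ℕ)}))
    (t : ℕ) (ht : 1 ≤ t) :
    (Ideal.span (Set.range fun i => x i ^ t)).colon (Ideal.span (Set.range x)) =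
      Ideal.span (Set.range (fun i => x i ^ t) ∪ {(∏ i, x i) ^ (t - 1)}) := by
  obtain ⟨a, rfl⟩ := Nat.exists_eq_add_of_le' ht
  rw [Nat.add_sub_cancel, span_union]
  exact (isQuasiRegularOn_univ_of_regular x hreg).colon_eq a
end

section
/- Let C → D be an étale ring homomorphism of integral domains of prime characteristic p. Then for every e ≥ 1, the natural map D ⊗_C (^e C) → (^e D) is an isomorphism, where ^e(−) denotes restriction of scalars along the e-th power of the Frobenius endomorphism. -/
universe u

/-- The restriction of scalars `^e A`: the ring `A` viewed as an `A`-algebra via the `e`-th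
power `F^e` of the Frobenius (for rings of characteristic `p`). -/
def FrobRes (_p _e : ℕ) (A : Type*) : Type _ := A

instance (p e : ℕ) (A : Type*) [CommRing A] : CommRing (FrobRes p e A) :=
  inferInstanceAs (CommRing A)

instance (p e : ℕ) (A : Type*) [CommRing A] [IsDomain A] : IsDomain (FrobRes p e A) :=
  inferInstanceAs (IsDomain A)

/-- The `A`-algebra structure on `^e A` given by `a ↦ a^{p^e}`. -/
instance FrobRes.algebraSelf (p e : ℕ) (A : Type*) [CommRing A] [Fact p.Prime] [CharP A p] :
    Algebra A (FrobRes p e A) :=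
  (iterateFrobenius A p e).toAlgebra

/-- For `C → D`, the `C`-algebra structure on `^e D` given by `c ↦ φ(c)^{p^e}`. -/
instance FrobRes.algebraBase (p e : ℕ) (C D : Type*) [CommRing C] [CommRing D]
    [Fact p.Prime] [CharP D p] [Algebra C D] : Algebra C (FrobRes p e D) :=
  ((iterateFrobenius D p e).comp (algebraMap C D)).toAlgebra

/-- The `C`-algebra map `D → ^e D`, `d ↦ d^{p^e}`. -/
def FrobRes.frobAlgHom (p e : ℕ) (C D : Type*) [CommRing C] [CommRing D]
    [Fact p.Prime] [CharP D p] [Algebra C D] : D →ₐ[C] FrobRes p e D :=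
  { iterateFrobenius D p e with commutes' := fun _ => rfl }

/-- The `C`-algebra map `^e C → ^e D` induced by the structure map `C → D`. -/
def FrobRes.baseAlgHom (p e : ℕ) (C D : Type*) [CommRing C] [CommRing D]
    [Fact p.Prime] [CharP C p] [CharP D p] [Algebra C D] :
    FrobRes p e C →ₐ[C] FrobRes p e D :=
  { (algebraMap C D : C →+* D) with
    commutes' := fun c => by
      show algebraMap C D (iterateFrobenius C p e c) =
        (iterateFrobenius D p e) (algebraMap C D c)
      simp [iterateFrobenius_def, map_pow] }

/-!
The relative Frobenius `^eC ⊗_C D → ^eD`, `a ⊗ d ↦ a·d^{p^e}`, is a map of `^eC`-algebras whose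
image contains every `p^e`-th power. If a subalgebra `T` of a finite-type unramified algebra `S`
contains all `p^e`-th powers, then `S` is finite over `T`, and the diagonal ideal of `S ⊗_T S` is
generated by the nilpotents `1 ⊗ s - s ⊗ 1` while unramifiedness makes it idempotent; so it
vanishes, `T → S` is a finite epimorphism, hence surjective. Thus the relative Frobenius is
surjective. Its kernel is finitely generated and killed by `p^e`-th powers, hence nilpotent;
formal smoothness of `^eD` splits the map, and formal unramifiedness of `^eC ⊗_C D` makes the
splitting an inverse.
-/

open TensorProduct

theorem add_pow_char_pow_of_algebra (p : ℕ) [Fact p.Prime] (R : Type*) {A : Type*}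
    [CommRing R] [CharP R p] [CommRing A] [Algebra R A] (x y : A) (n : ℕ) :
    (x + y) ^ p ^ n = x ^ p ^ n + y ^ p ^ n := by
  rcases subsingleton_or_nontrivial A with _ | _
  · exact Subsingleton.elim _ _
  have : CharP A p := (CharP.charP_iff_prime_eq_zero Fact.out).mpr <| by
    rw [← map_natCast (algebraMap R A), CharP.cast_eq_zero, map_zero]
  exact add_pow_char_pow x y p n

theorem one_tmul_sub_tmul_one_pow_eq_zero {R S : Type*} [CommRing R] [CommRing S] [Algebra R S]
    (p : ℕ) [Fact p.Prime] [CharP S p] (n : ℕ) {s : S}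
    (hs : s ^ p ^ n ∈ (algebraMap R S).range) :
    ((1 : S) ⊗ₜ[R] s - s ⊗ₜ[R] 1) ^ p ^ n = 0 := by
  obtain ⟨r, hr⟩ := hs
  have h : ((1 : S) ⊗ₜ[R] s) ^ p ^ n = (s ⊗ₜ[R] (1 : S)) ^ p ^ n := by
    rw [Algebra.TensorProduct.tmul_pow, Algebra.TensorProduct.tmul_pow, one_pow, ← hr,
      Algebra.algebraMap_eq_smul_one, smul_tmul]
  rwa [← sub_add_cancel ((1 : S) ⊗ₜ[R] s) (s ⊗ₜ[R] 1), add_pow_char_pow_of_algebra p S,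
    add_eq_right] at h

namespace Algebra.FormallyUnramified

theorem surjective_algebraMap_of_isNilpotent_one_tmul_sub {R S : Type*} [CommRing R]
    [CommRing S] [Algebra R S] [Module.Finite R S] [FormallyUnramified R S]
    (h : ∀ s : S, IsNilpotent ((1 : S) ⊗ₜ[R] s - s ⊗ₜ[R] 1)) :
    Function.Surjective (algebraMap R S) := by
  obtain ⟨t, ht, ht1⟩ := (iff_exists_tensorProduct (R := R) (S := S)).mp inferInstance
  have hnil : KaehlerDifferential.ideal R S ≤ nilradical (S ⊗[R] S) := by
    rw [← KaehlerDifferential.span_range_eq_ideal, Ideal.span_le, Set.range_subset_iff]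
    exact h
  have hunit : IsUnit t := by
    simpa using (mem_nilradical.mp (hnil (show 1 - t ∈ KaehlerDifferential.ideal R S by
      simp [RingHom.mem_ker, ht1]))).isUnit_one_sub
  rw [← isEpi_iff_surjective_algebraMap_of_finite, isEpi_iff_forall_one_tmul_eq]
  exact fun s ↦ sub_eq_zero.mp (hunit.mul_left_eq_zero.mp (ht s))

theorem subalgebra_eq_top_of_pow_mem {R S : Type*} [CommRing R] [CommRing S] [Algebra R S]
    [FormallyUnramified R S] [FiniteType R S] (p : ℕ) [Fact p.Prime] [CharP S p] (n : ℕ)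
    (T : Subalgebra R S) (hT : ∀ s : S, s ^ p ^ n ∈ T) : T = ⊤ := by
  have hpow (s : S) : s ^ p ^ n ∈ (algebraMap T S).range := ⟨⟨_, hT s⟩, rfl⟩
  have : Algebra.IsIntegral T S := ⟨fun s ↦
    (isIntegral_algebraMap (x := (⟨_, hT s⟩ : T))).of_pow (pow_pos (Fact.out : p.Prime).pos n)⟩
  have : FiniteType T S := .of_restrictScalars_finiteType R T S
  have : Module.Finite T S := Algebra.IsIntegral.finite
  have : FormallyUnramified T S := .of_restrictScalars R T S
  have hsurj := surjective_algebraMap_of_isNilpotent_one_tmul_sub (R := T) (S := S)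
    fun s ↦ ⟨_, one_tmul_sub_tmul_one_pow_eq_zero p n (hpow s)⟩
  refine Algebra.eq_top_iff.mpr fun s ↦ ?_
  obtain ⟨t, rfl⟩ := hsurj s
  exact t.2

end Algebra.FormallyUnramified

theorem AlgHom.injective_of_surjective_of_isNilpotent_ker {R A B : Type*} [CommRing R]
    [CommRing A] [CommRing B] [Algebra R A] [Algebra R B] [Algebra.FormallyUnramified R A]
    [Algebra.FormallySmooth R B] (f : A →ₐ[R] B) (hf : Function.Surjective f)
    (hker : IsNilpotent (RingHom.ker f)) : Function.Injective f := by
  let s := Algebra.FormallySmooth.liftOfSurjective (AlgHom.id R B) f hf hker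
  have hs : s.comp f = AlgHom.id R A :=
    Algebra.FormallyUnramified.lift_unique_of_ringHom (f : A →+* B) hker _ _ (by ext; simp [s])
  exact Function.HasLeftInverse.injective ⟨s, fun x ↦ congr($hs x)⟩

namespace FrobRes

instance charP (p e : ℕ) (A : Type*) [CommRing A] [CharP A p] : CharP (FrobRes p e A) p :=
  inferInstanceAs (CharP A p)

instance algebra (p e : ℕ) (C D : Type*) [CommRing C] [CommRing D] [Algebra C D] :
    Algebra (FrobRes p e C) (FrobRes p e D) :=
  inferInstanceAs (Algebra C D)

instance isScalarTower (p e : ℕ) (C D : Type*) [CommRing C] [CommRing D] [Fact p.Prime]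
    [CharP C p] [CharP D p] [Algebra C D] :
    IsScalarTower C (FrobRes p e C) (FrobRes p e D) :=
  .of_algebraMap_eq fun c ↦ (map_pow (algebraMap C D) c (p ^ e)).symm

instance etale (p e : ℕ) (C D : Type*) [CommRing C] [CommRing D] [Algebra C D]
    [Algebra.Etale C D] : Algebra.Etale (FrobRes p e C) (FrobRes p e D) :=
  inferInstanceAs (Algebra.Etale C D)

theorem algebraMap_self_apply (p e : ℕ) {A : Type*} [CommRing A] [Fact p.Prime] [CharP A p]
    (a : A) : algebraMap A (FrobRes p e A) a = a ^ p ^ e :=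
  iterateFrobenius_def p e a

theorem frobAlgHom_apply (p e : ℕ) {C D : Type*} [CommRing C] [CommRing D] [Fact p.Prime]
    [CharP D p] [Algebra C D] (d : D) : frobAlgHom p e C D d = d ^ p ^ e :=
  iterateFrobenius_def p e d

variable (p e : ℕ) (C D : Type*) [CommRing C] [CommRing D] [Fact p.Prime] [CharP C p]
  [CharP D p] [Algebra C D]

def relFrob : FrobRes p e C ⊗[C] D →ₐ[FrobRes p e C] FrobRes p e D :=
  Algebra.TensorProduct.lift (Algebra.ofId _ _) (frobAlgHom p e C D) fun _ _ ↦ .all _ _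

variable {C D}

theorem relFrob_tmul (a : FrobRes p e C) (d : D) :
    relFrob p e C D (a ⊗ₜ d) =
      algebraMap (FrobRes p e C) (FrobRes p e D) a * frobAlgHom p e C D d :=
  Algebra.TensorProduct.lift_tmul _ _ _ a d

theorem pow_mem_range_relFrob (s : FrobRes p e D) : s ^ p ^ e ∈ (relFrob p e C D).range :=
  (AlgHom.mem_range _).mpr ⟨1 ⊗ₜ[C] s, (relFrob_tmul (C := C) (D := D) p e 1 s).trans <| by
    rw [map_one, one_mul]; exact frobAlgHom_apply (C := C) (D := D) p e s⟩

theorem includeRight_relFrob (b : FrobRes p e C ⊗[C] D) :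
    Algebra.TensorProduct.includeRight (R := C) (A := FrobRes p e C) (B := D)
      (relFrob p e C D b) = b ^ p ^ e := by
  induction b using TensorProduct.induction_on with
  | zero => exact (map_zero _).trans (zero_pow (pow_ne_zero _ (Fact.out : p.Prime).ne_zero)).symm
  | tmul a d =>
    have h (c : C) (x : D) : (1 : FrobRes p e C) ⊗ₜ[C] (algebraMap C D c * x) =
        algebraMap C (FrobRes p e C) c ⊗ₜ x := by
      rw [← Algebra.smul_def, ← smul_tmul, Algebra.smul_def, mul_one]
    rw [relFrob_tmul, frobAlgHom_apply, Algebra.TensorProduct.tmul_pow, ← algebraMap_self_apply]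
    exact h a (d ^ p ^ e)
  | add x y hx hy =>
    rw [map_add, add_pow_char_pow_of_algebra p C, ← hx, ← hy]
    exact map_add _ _ _

theorem relFrob_surjective [Algebra.FormallyUnramified C D] [Algebra.FiniteType C D] :
    Function.Surjective (relFrob p e C D) := by
  have : Algebra.FormallyUnramified (FrobRes p e C) (FrobRes p e D) :=
    inferInstanceAs (Algebra.FormallyUnramified C D)
  have : Algebra.FiniteType (FrobRes p e C) (FrobRes p e D) :=
    inferInstanceAs (Algebra.FiniteType C D)
  rw [← AlgHom.range_eq_top]
  exact Algebra.FormallyUnramified.subalgebra_eq_top_of_pow_mem p e _ (pow_mem_range_relFrob p e)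

theorem relFrob_bijective [Algebra.Etale C D] : Function.Bijective (relFrob p e C D) := by
  have hsurj := relFrob_surjective (C := C) (D := D) p e
  have hnil : IsNilpotent (RingHom.ker (relFrob p e C D)) :=
    (Algebra.FinitePresentation.ker_fG_of_surjective _ hsurj).isNilpotent_iff_le_nilradical.mpr
      fun b hb ↦ by
        have hb : relFrob p e C D b = 0 := hb
        exact ⟨p ^ e, by rw [← includeRight_relFrob, hb]; exact map_zero _⟩
  exact ⟨AlgHom.injective_of_surjective_of_isNilpotent_ker _ hsurj hnil, hsurj⟩

theorem productMap_eq_relFrob_comp_comm :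
    Algebra.TensorProduct.productMap (frobAlgHom p e C D) (baseAlgHom p e C D) =
      ((relFrob p e C D).restrictScalars C).comp
        (Algebra.TensorProduct.comm C D (FrobRes p e C)).toAlgHom := by
  refine Algebra.TensorProduct.ext' fun d c ↦ ?_
  show frobAlgHom p e C D d * baseAlgHom p e C D c = relFrob p e C D (c ⊗ₜ d)
  rw [relFrob_tmul, mul_comm]
  rfl

end FrobRes

open TensorProduct in
theorem etale_frobenius_baseChange_bijective_general (p : ℕ) [Fact p.Prime] (C D : Type u)
    [CommRing C] [CommRing D] [CharP C p] [CharP D p]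
    [Algebra C D] [Algebra.Etale C D] (e : ℕ) :
    Function.Bijective
      (Algebra.TensorProduct.productMap
        (FrobRes.frobAlgHom p e C D) (FrobRes.baseAlgHom p e C D) :
        D ⊗[C] FrobRes p e C → FrobRes p e D) := by
  rw [FrobRes.productMap_eq_relFrob_comp_comm]
  exact (FrobRes.relFrob_bijective p e).comp (AlgEquiv.bijective _)

open TensorProduct in
/-- Let `C → D` be an étale homomorphism of integral domains of prime characteristic `p`. Then
for every `e ≥ 1` the natural map `D ⊗_C (^e C) → ^e D`, `d ⊗ c ↦ d^{p^e}·c`, is an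
isomorphism, where `^e(−)` is restriction of scalars along the `e`-th power of Frobenius. -/
theorem etale_frobenius_baseChange_bijective (p : ℕ) [Fact p.Prime] (C D : Type u)
    [CommRing C] [CommRing D] [IsDomain C] [IsDomain D] [CharP C p] [CharP D p]
    [Algebra C D] [Algebra.Etale C D] (e : ℕ) (he : 1 ≤ e) :
    Function.Bijective
      (Algebra.TensorProduct.productMap
        (FrobRes.frobAlgHom p e C D) (FrobRes.baseAlgHom p e C D) :
        D ⊗[C] FrobRes p e C → FrobRes p e D) :=
  etale_frobenius_baseChange_bijective_general p C D e
end

section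
/- Let (R, m) be a local ring, M an R-module, and c : R → T an R-module homomorphism to an R-module T. If the base change c ⊗ id_E : E → T ⊗_R E is injective, where E is the injective hull of the residue field R/m, and R is Noetherian complete, then c is pure. -/
/-!
For `x` in the kernel of `c ⊗ id_M`, naturality of `c ⊗ -` and injectivity of `c ⊗ id_E` show that
every `φ : M → E` kills the image of `x` in `M ≅ R ⊗ M`; so it suffices that maps into `E`
separate the points of `M`. A point `m ≠ 0` is separated by extending `R ∙ m ↠ k ↪ E` to `M`,
which needs Baer's criterion for `E`.

`Module.Injective R E` only provides extensions along modules in the universe of `E`, so Baer's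
criterion has to be derived. As `k` is essential in `E`, every associated prime of `E` is `m`, so
a map `g : J → E` from an ideal kills `m ^ a • J` for some `a`. By Artin–Rees, `g` then factors
through the image of `J` in `R ⧸ m ^ n`; this quotient has finite length with simple factors `k`,
which embeds in `E`, so it is small enough to extend along.
-/

open IsLocalRing

universe w

section Extension

variable {R X Y E : Type*} [CommRing R] [AddCommGroup X] [Module R X]
  [AddCommGroup Y] [Module R Y] [AddCommGroup E] [Module R E]

theorem LinearMap.exists_comp_rangeRestrict_eq_of_ker_le (f : X →ₗ[R] Y) (g : X →ₗ[R] E)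
    (h : LinearMap.ker f ≤ LinearMap.ker g) :
    ∃ g' : LinearMap.range f →ₗ[R] E, g' ∘ₗ f.rangeRestrict = g :=
  ⟨(LinearMap.ker f).liftQ g h ∘ₗ f.quotKerEquivRange.symm.toLinearMap, by
    ext x
    have hx : f.rangeRestrict x = f.quotKerEquivRange (Submodule.Quotient.mk x) := rfl
    simp [hx]⟩

theorem Module.Baer.exists_comp_eq_of_ker_le (hE : Module.Baer R E) (f : X →ₗ[R] Y)
    (g : X →ₗ[R] E) (h : LinearMap.ker f ≤ LinearMap.ker g) :
    ∃ φ : Y →ₗ[R] E, φ ∘ₗ f = g := by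
  obtain ⟨g', rfl⟩ := f.exists_comp_rangeRestrict_eq_of_ker_le g h
  obtain ⟨φ, hφ⟩ := hE.extension_property _ (LinearMap.range f).injective_subtype g'
  exact ⟨φ, by rw [← hφ]; rfl⟩

theorem Module.Injective.exists_comp_eq_of_ker_le {E : Type w} [AddCommGroup E] [Module R E]
    [Module.Injective R E] [Small.{w} Y] (f : X →ₗ[R] Y) (g : X →ₗ[R] E)
    (h : LinearMap.ker f ≤ LinearMap.ker g) :
    ∃ φ : Y →ₗ[R] E, φ ∘ₗ f = g := by
  obtain ⟨g', rfl⟩ := f.exists_comp_rangeRestrict_eq_of_ker_le g h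
  let eS := Shrink.linearEquiv R (LinearMap.range f)
  let eY := Shrink.linearEquiv R Y
  obtain ⟨φ, hφ⟩ := Module.Injective.out (R := R)
    (eY.symm.toLinearMap ∘ₗ (LinearMap.range f).subtype ∘ₗ eS.toLinearMap)
    (eY.symm.injective.comp <| (LinearMap.range f).injective_subtype.comp eS.injective)
    (g' ∘ₗ eS.toLinearMap)
  refine ⟨φ ∘ₗ eY.symm.toLinearMap, LinearMap.ext fun x ↦ ?_⟩
  simpa [eS] using hφ (eS.symm (f.rangeRestrict x))

end Extension

theorem Submodule.small_of_small_of_small_quotient {R M : Type*} [Ring R] [AddCommGroup M]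
    [Module R M] (N : Submodule R M) [Small.{w} N] [Small.{w} (M ⧸ N)] : Small.{w} M :=
  have : Small.{w} ((M ⧸ N.toAddSubgroup) × N.toAddSubgroup) :=
    inferInstanceAs (Small.{w} ((M ⧸ N) × N))
  small_map (AddSubgroup.addGroupEquivQuotientProdAddSubgroup (s := N.toAddSubgroup))

theorem IsLocalRing.small_of_isSimpleModule {R S : Type*} [CommRing R] [IsLocalRing R]
    [Small.{w} (ResidueField R)] [AddCommGroup S] [Module R S] [IsSimpleModule R S] :
    Small.{w} S := by
  obtain ⟨I, hI, ⟨e⟩⟩ := isSimpleModule_iff_quot_maximal.mp ‹IsSimpleModule R S›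
  obtain rfl := IsLocalRing.eq_maximalIdeal hI
  have : Small.{w} (R ⧸ maximalIdeal R) := ‹Small.{w} (ResidueField R)›
  exact small_map e.toEquiv

theorem IsFiniteLength.small {R M : Type*} [CommRing R] [IsLocalRing R]
    [Small.{w} (ResidueField R)] [AddCommGroup M] [Module R M] (h : IsFiniteLength R M) :
    Small.{w} M := by
  induction h with
  | of_subsingleton => infer_instance
  | @of_simple_quotient M _ _ N _ _ ih =>
    have := IsLocalRing.small_of_isSimpleModule.{w} (R := R) (S := M ⧸ N)
    exact N.small_of_small_of_small_quotient

theorem IsLocalRing.isFiniteLength_quotient_maximalIdeal_pow {R : Type*} [CommRing R]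
    [IsNoetherianRing R] [IsLocalRing R] (n : ℕ) :
    IsFiniteLength R (R ⧸ maximalIdeal R ^ n) := by
  rcases n with _ | n
  · rw [pow_zero, Ideal.one_eq_top]
    exact .of_subsingleton
  have : IsArtinianRing (R ⧸ maximalIdeal R ^ (n + 1)) :=
    quotient_artinian_of_mem_minimalPrimes_of_isLocalRing _ (by
      rw [← Ideal.radical_minimalPrimes, Ideal.radical_pow _ n.succ_ne_zero,
        (maximalIdeal.isMaximal R).isPrime.radical, Ideal.minimalPrimes_eq_subsingleton_self]
      rfl)
  exact isFiniteLength_iff_isNoetherian_isArtinian.mpr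
    ⟨inferInstance, isArtinian_of_surjective_algebraMap (R := R ⧸ maximalIdeal R ^ (n + 1))
      Ideal.Quotient.mk_surjective⟩

theorem IsLocalRing.ResidueField.smul_eq_zero {R : Type*} [CommRing R] [IsLocalRing R] {r : R}
    (hr : r ∈ maximalIdeal R) (z : ResidueField R) : r • z = 0 := by
  rw [Algebra.smul_def, ResidueField.algebraMap_eq, (residue_eq_zero_iff r).mpr hr, zero_mul]

theorem IsAssociatedPrime.eq_maximalIdeal_of_essential {R E : Type*} [CommRing R]
    [IsNoetherianRing R] [IsLocalRing R] [AddCommGroup E] [Module R E]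
    (ι : ResidueField R →ₗ[R] E) (hess : ∀ N : Submodule R E, N ≠ ⊥ → N ⊓ LinearMap.range ι ≠ ⊥)
    {p : Ideal R} (hp : IsAssociatedPrime p E) : p = maximalIdeal R := by
  obtain ⟨hprime, x, rfl⟩ := isAssociatedPrime_iff.mp hp
  have hx : R ∙ x ≠ ⊥ := by
    intro h
    apply hprime.ne_top
    ext r
    simp_all [Submodule.mem_colon_singleton, Submodule.span_singleton_eq_bot.mp h]
  obtain ⟨y, ⟨hyx, z, rfl⟩, hy⟩ := (Submodule.ne_bot_iff _).mp (hess _ hx)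
  obtain ⟨s, hs⟩ := Submodule.mem_span_singleton.mp hyx
  have hs_notMem : s ∉ Submodule.colon ⊥ {x} := by
    simpa [Submodule.mem_colon_singleton, hs] using hy
  refine ((maximalIdeal.isMaximal R).eq_of_le hprime.ne_top fun r hr ↦ ?_).symm
  refine (hprime.mem_or_mem ?_).resolve_right hs_notMem
  rw [Submodule.mem_colon_singleton, mul_smul, hs, ← map_smul,
    ResidueField.smul_eq_zero hr, map_zero]
  exact Submodule.zero_mem _

theorem exists_pow_le_annihilator_of_associatedPrimes {R M : Type*} [CommRing R]
    [IsNoetherianRing R] [AddCommGroup M] [Module R M] [Module.Finite R M] {m : Ideal R}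
    (hass : ∀ p ∈ associatedPrimes R M, p = m) :
    ∃ n, m ^ n ≤ Module.annihilator R M := by
  refine Ideal.exists_pow_le_of_le_radical_of_fg ?_ (IsNoetherian.noetherian m)
  rw [← Ideal.sInf_minimalPrimes]
  exact le_sInf fun p hp ↦ (hass p
    (Module.associatedPrimes.minimalPrimes_annihilator_subset_associatedPrimes R M hp)).ge

theorem Ideal.exists_pow_inf_le_pow_smul {R M : Type*} [CommRing R] [IsNoetherianRing R]
    [AddCommGroup M] [Module R M] [Module.Finite R M] (I : Ideal R) (N : Submodule R M) (a : ℕ) :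
    ∃ n, I ^ n • ⊤ ⊓ N ≤ I ^ a • N := by
  obtain ⟨k, hk⟩ := I.exists_pow_inf_eq_pow_smul N
  refine ⟨k + a, ?_⟩
  rw [hk _ (Nat.le_add_right k a), Nat.add_sub_cancel_left]
  exact smul_mono_right _ inf_le_right

theorem IsLocalRing.baer_of_associatedPrimes {R : Type*} [CommRing R] [IsNoetherianRing R]
    [IsLocalRing R] {E : Type w} [AddCommGroup E] [Module R E] [Module.Injective R E]
    [Small.{w} (ResidueField R)] (hass : ∀ p ∈ associatedPrimes R E, p = maximalIdeal R) :
    Module.Baer R E := by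
  intro J g
  obtain ⟨a, ha⟩ := exists_pow_le_annihilator_of_associatedPrimes (M := LinearMap.range g)
    fun p hp ↦ hass p (associatedPrimes.subset_of_injective (Submodule.injective_subtype _) hp)
  have hkill : maximalIdeal R ^ a • (J : Submodule R R) ≤ (LinearMap.ker g).map J.subtype := by
    refine Submodule.smul_le.mpr fun r hr x hx ↦ ⟨r • ⟨x, hx⟩, ?_, rfl⟩
    rw [SetLike.mem_coe, LinearMap.mem_ker, map_smul]
    exact congrArg Subtype.val
      (Module.mem_annihilator.mp (ha hr) ⟨g ⟨x, hx⟩, LinearMap.mem_range_self g _⟩)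
  obtain ⟨n, hn⟩ := (maximalIdeal R).exists_pow_inf_le_pow_smul (J : Submodule R R) a
  have : Small.{w} (R ⧸ maximalIdeal R ^ n) := (isFiniteLength_quotient_maximalIdeal_pow n).small
  obtain ⟨φ, hφ⟩ := Module.Injective.exists_comp_eq_of_ker_le
    ((maximalIdeal R ^ n).mkQ ∘ₗ J.subtype) g fun x hx ↦ by
      obtain ⟨y, hy, hyx⟩ := hkill (hn ⟨by simpa [Ideal.Quotient.eq_zero_iff_mem] using hx, x.2⟩)
      rwa [Subtype.ext hyx] at hy
  exact ⟨φ ∘ₗ (maximalIdeal R ^ n).mkQ, fun x hx ↦ LinearMap.congr_fun hφ ⟨x, hx⟩⟩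

theorem Module.Baer.exists_apply_ne_zero {R E : Type*} [CommRing R] [IsLocalRing R]
    [AddCommGroup E] [Module R E] (hE : Module.Baer R E) {ι : ResidueField R →ₗ[R] E}
    (hι : Function.Injective ι) {M : Type*} [AddCommGroup M] [Module R M] {x : M} (hx : x ≠ 0) :
    ∃ φ : M →ₗ[R] E, φ x ≠ 0 := by
  have hker_ne : LinearMap.ker (LinearMap.toSpanSingleton R M x) ≠ ⊤ := fun h ↦ hx <| by
    simpa using (h ▸ Submodule.mem_top : (1 : R) ∈ LinearMap.ker (LinearMap.toSpanSingleton R M x))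
  have hker : LinearMap.ker (LinearMap.toSpanSingleton R M x) ≤
      LinearMap.ker (ι ∘ₗ Algebra.linearMap R (ResidueField R)) := fun r hr ↦ by
    simp [ResidueField.algebraMap_eq, (residue_eq_zero_iff r).mpr (le_maximalIdeal hker_ne hr)]
  obtain ⟨φ, hφ⟩ := hE.exists_comp_eq_of_ker_le _ _ hker
  refine ⟨φ, fun h ↦ one_ne_zero (hι ?_)⟩
  simpa [h] using (LinearMap.congr_fun hφ 1).symm

theorem LinearMap.rTensor_injective_of_separating {R T M E : Type*} [CommRing R]
    [AddCommGroup T] [Module R T] [AddCommGroup M] [Module R M] [AddCommGroup E] [Module R E]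
    (c : R →ₗ[R] T) (hc : Function.Injective (c.rTensor E))
    (hsep : ∀ x : M, x ≠ 0 → ∃ φ : M →ₗ[R] E, φ x ≠ 0) :
    Function.Injective (c.rTensor M) := by
  refine (injective_iff_map_eq_zero _).mpr fun x hx ↦ ?_
  by_contra hx0
  obtain ⟨φ, hφ⟩ := hsep (TensorProduct.lid R M x) ((TensorProduct.lid R M).map_ne_zero_iff.mpr hx0)
  have hnat : c.rTensor E (φ.lTensor R x) = φ.lTensor T (c.rTensor M x) := by
    rw [← LinearMap.comp_apply, ← LinearMap.comp_apply, LinearMap.rTensor_comp_lTensor,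
      LinearMap.lTensor_comp_rTensor]
  have hφx : φ.lTensor R x = 0 := hc (by rw [hnat, hx, map_zero, map_zero])
  have hlid : φ ∘ₗ TensorProduct.lid R M = TensorProduct.lid R E ∘ₗ φ.lTensor R :=
    TensorProduct.ext' fun r m ↦ by simp
  exact hφ (by simpa [hφx] using LinearMap.congr_fun hlid x)

theorem pure_of_injective_on_injectiveHull_general (R : Type*) [CommRing R] [IsNoetherianRing R]
    [IsLocalRing R]
    (T : Type*) [AddCommGroup T] [Module R T] (c : R →ₗ[R] T)
    (E : Type*) [AddCommGroup E] [Module R E]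
    (hEinj : Module.Injective R E)
    (ι : IsLocalRing.ResidueField R →ₗ[R] E)
    (hι : Function.Injective ι)
    (hess : ∀ N : Submodule R E, N ≠ ⊥ → N ⊓ LinearMap.range ι ≠ ⊥)
    (hc : Function.Injective (LinearMap.rTensor E c)) :
    ∀ (M : Type*) [AddCommGroup M] [Module R M],
      Function.Injective (LinearMap.rTensor M c) := by
  intro M _ _
  have : Small (ResidueField R) := small_of_injective hι
  have hB : Module.Baer R E :=
    baer_of_associatedPrimes fun _ hp ↦ hp.eq_maximalIdeal_of_essential ι hess
  exact c.rTensor_injective_of_separating hc fun _ hx ↦ hB.exists_apply_ne_zero hι hx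

/-- Hochster–Huneke purity criterion: let `(R, m)` be a complete Noetherian local ring, `T` an
`R`-module and `c : R → T` an `R`-module homomorphism. Let `E` be an injective hull of the
residue field `R/m` (an injective module containing `R/m` as an essential submodule). If the
base change `c ⊗ id_E : E ≅ R ⊗ E → T ⊗ E` is injective, then `c` is pure: `c ⊗ id_M` is
injective for every `R`-module `M`. -/
theorem pure_of_injective_on_injectiveHull (R : Type*) [CommRing R] [IsNoetherianRing R]
    [IsLocalRing R] [IsAdicComplete (IsLocalRing.maximalIdeal R) R]
    (T : Type*) [AddCommGroup T] [Module R T] (c : R →ₗ[R] T)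
    (E : Type*) [AddCommGroup E] [Module R E]
    (hEinj : Module.Injective R E)
    (ι : IsLocalRing.ResidueField R →ₗ[R] E)
    (hι : Function.Injective ι)
    (hess : ∀ N : Submodule R E, N ≠ ⊥ → N ⊓ LinearMap.range ι ≠ ⊥)
    (hc : Function.Injective (LinearMap.rTensor E c)) :
    ∀ (M : Type*) [AddCommGroup M] [Module R M],
      Function.Injective (LinearMap.rTensor M c) :=
  pure_of_injective_on_injectiveHull_general R T c E hEinj ι hι hess hc
end
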